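/- arXiv:cs/0601002 — 2 statements merged into one kernel-verified Lean document; each statement's English description precedes it below -/
import Mathlib

section
/- Let x, y, a, b, c, d be Boolean variables, and define a 1-IN-3 clause (u,v,w) to be satisfied iff exactly one of u, v, w is true. Then the conjunction of the clauses (x,a,y), (a,b,c), (a,c,d), (b,c,d) is satisfiable (for some choice of a,b,c,d) if and only if exactly one of x and y is true. -/
/-- A 1-IN-3 clause `(u,v,w)` is satisfied iff exactly one of `u`, `v`, `w` is true. -/
def OneInThree (u v w : Bool) : Prop :=
  (u = true ∧ v = false ∧ w = false) ∨
  (u = false ∧ v = true ∧ w = false) ∨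
  (u = false ∧ v = false ∧ w = true)

/-- The inequality gadget: the clauses `(x,a,y), (a,b,c), (a,c,d), (b,c,d)` are
simultaneously satisfiable iff exactly one of `x` and `y` is true. -/
theorem inequality_gadget (x y : Bool) :
    (∃ a b c d : Bool,
      OneInThree x a y ∧ OneInThree a b c ∧ OneInThree a c d ∧ OneInThree b c d) ↔
    ((x = true ∧ y = false) ∨ (x = false ∧ y = true)) := by
  constructor
  · rintro ⟨a, b, c, d, h⟩
    revert h
    cases x <;> cases y <;> cases a <;> cases b <;> cases c <;> cases d <;> simp [OneInThree]
  · rintro (⟨hx, hy⟩ | ⟨hx, hy⟩) <;> subst hx <;> subst hy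
    · exact ⟨false, false, true, false, by simp [OneInThree]⟩
    · exact ⟨false, false, true, false, by simp [OneInThree]⟩
end

section
/- Let Ψ be a 3-CNF formula and consider the transformed formula Φ' obtained by replacing each clause (x ∨ y ∨ z) of Ψ by the positive 1-IN-3 gadget (x,u,a) ∧ (y,u,b) ∧ (a,b,q) ∧ (u = c) ∧ (d ≠ z) ∧ (c,d,r) with fresh variables u,a,b,q,c,d,r per clause (where equality and inequality constraints are as defined). Then Ψ is satisfiable (as a 3-CNF formula) if and only if Φ' has an assignment satisfying every 1-IN-3 clause. -/
set_option synthInstance.maxSize 2000 in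
lemma gadget_correct (x y z : Bool) :
    (x = true ∨ y = true ∨ z = true) ↔
    ∃ u a b q c d r : Bool,
      OneInThree x u a ∧ OneInThree y u b ∧ OneInThree a b q ∧
      u = c ∧ d ≠ z ∧ OneInThree c d r := by
  revert x y z
  simp only [OneInThree, ne_eq]
  decide

/-- Correctness of the clause transformation: a 3-CNF formula `Ψ` with only
positive literals (a list of clauses, each a triple of variable indices) is
satisfiable iff the transformed positive 1-IN-3 formula `Φ'` is satisfiable,
where each clause `(x ∨ y ∨ z)` is replaced by the gadget
`(x,u,a) ∧ (y,u,b) ∧ (a,b,q) ∧ (u = c) ∧ (d ≠ z) ∧ (c,d,r)` with fresh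
auxiliary variables `u, a, b, q, c, d, r` introduced independently for each
clause (here indexed by the clause's position in the list). -/
theorem positive_one_in_three_transformation (Ψ : List (ℕ × ℕ × ℕ)) :
    (∃ v : ℕ → Bool, ∀ cl ∈ Ψ,
        v cl.1 = true ∨ v cl.2.1 = true ∨ v cl.2.2 = true) ↔
    (∃ (v : ℕ → Bool) (u a b q c d r : ℕ → Bool),
      ∀ (k : ℕ) (hk : k < Ψ.length),
        OneInThree (v (Ψ[k].1)) (u k) (a k) ∧
        OneInThree (v (Ψ[k].2.1)) (u k) (b k) ∧
        OneInThree (a k) (b k) (q k) ∧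
        u k = c k ∧
        d k ≠ v (Ψ[k].2.2) ∧
        OneInThree (c k) (d k) (r k)) := by
  constructor
  · rintro ⟨v, hv⟩
    have h : ∀ k : ℕ, ∃ t : Bool × Bool × Bool × Bool × Bool × Bool × Bool,
        ∀ hk : k < Ψ.length,
          OneInThree (v (Ψ[k].1)) t.1 t.2.1 ∧
          OneInThree (v (Ψ[k].2.1)) t.1 t.2.2.1 ∧
          OneInThree t.2.1 t.2.2.1 t.2.2.2.1 ∧
          t.1 = t.2.2.2.2.1 ∧
          t.2.2.2.2.2.1 ≠ v (Ψ[k].2.2) ∧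
          OneInThree t.2.2.2.2.1 t.2.2.2.2.2.1 t.2.2.2.2.2.2 := by
      intro k
      by_cases hk : k < Ψ.length
      · have hmem : Ψ[k] ∈ Ψ := List.getElem_mem hk
        have hx := hv _ hmem
        obtain ⟨u, a, b, q, c, d, r, h1, h2, h3, h4, h5, h6⟩ :=
          (gadget_correct (v (Ψ[k].1)) (v (Ψ[k].2.1)) (v (Ψ[k].2.2))).mp hx
        exact ⟨⟨u, a, b, q, c, d, r⟩, fun _ => ⟨h1, h2, h3, h4, h5, h6⟩⟩
      · exact ⟨⟨false, false, false, false, false, false, false⟩,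
          fun hk' => absurd hk' hk⟩
    choose f hf using h
    exact ⟨v, fun k => (f k).1, fun k => (f k).2.1, fun k => (f k).2.2.1,
      fun k => (f k).2.2.2.1, fun k => (f k).2.2.2.2.1,
      fun k => (f k).2.2.2.2.2.1, fun k => (f k).2.2.2.2.2.2,
      fun k hk => hf k hk⟩
  · rintro ⟨v, u, a, b, q, c, d, r, hall⟩
    refine ⟨v, fun cl hcl => ?_⟩
    obtain ⟨k, hk, rfl⟩ := List.mem_iff_getElem.mp hcl
    obtain ⟨h1, h2, h3, h4, h5, h6⟩ := hall k hk
    exact (gadget_correct _ _ _).mpr ⟨u k, a k, b k, q k, c k, d k, r k,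
      h1, h2, h3, h4, h5, h6⟩
end
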